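/- For all x ≠ y in ℝ \ {−A₁,…,−A_n}, the following Poisson bracket relations hold (for arbitrary smooth potentials 𝒰₁,…,𝒰_{N−1}, with no recurrence hypotheses): {U(x), U(y)} = 0, {V(x), V(y)} = 0, {V(x), U(y)} = (2/(y−x))·(U(x) − U(y)), and {W_N(x), U(y)} = (4/(x−y))·(V(x) − V(y)). -/

import Mathlib

open scoped BigOperators
open Finset Matrix

noncomputable section

/-- Phase space ℝ^{2m}: a point is a pair (q, p). -/
abbrev Phase (m : ℕ) := (Fin m → ℝ) × (Fin m → ℝ)

/-- Partial derivative with respect to `q i`. -/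
noncomputable def pdq {m : ℕ} (f : Phase m → ℝ) (i : Fin m) (x : Phase m) : ℝ :=
  deriv (fun t => f (Function.update x.1 i t, x.2)) (x.1 i)

/-- Partial derivative with respect to `p i`. -/
noncomputable def pdp {m : ℕ} (f : Phase m → ℝ) (i : Fin m) (x : Phase m) : ℝ :=
  deriv (fun t => f (x.1, Function.update x.2 i t)) (x.2 i)

/-- Canonical Poisson bracket {f,g} = Σ_i (∂f/∂p_i ∂g/∂q_i − ∂f/∂q_i ∂g/∂p_i). -/
noncomputable def poisson {m : ℕ} (f g : Phase m → ℝ) (x : Phase m) : ℝ :=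
  ∑ i, (pdp f i x * pdq g i x - pdq f i x * pdp g i x)

/-- Partial derivative of a function of q only. -/
noncomputable def pdq' {m : ℕ} (f : (Fin m → ℝ) → ℝ) (i : Fin m) (q : Fin m → ℝ) : ℝ :=
  deriv (fun t => f (Function.update q i t)) (q i)

/-- U(z) = 4z − 4q_{n+1} + 4B − Σ q_i²/(z+A_i). -/
noncomputable def Ufun (n : ℕ) (A : Fin n → ℝ) (B : ℝ) (z : ℝ) (x : Phase (n+1)) : ℝ :=
  4 * z - 4 * x.1 (Fin.last n) + 4 * B - ∑ i : Fin n, (x.1 i.castSucc) ^ 2 / (z + A i)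

/-- V(z) = 2p_{n+1} + Σ p_i q_i/(z+A_i). -/
noncomputable def Vfun (n : ℕ) (A : Fin n → ℝ) (z : ℝ) (x : Phase (n+1)) : ℝ :=
  2 * x.2 (Fin.last n) + ∑ i : Fin n, x.2 i.castSucc * x.1 i.castSucc / (z + A i)

/-- Q_N(z) = z^{N−2} − (1/2) Σ_{k=0}^{N−3} (∂𝒰_{N−k−1}/∂q_{n+1}) z^k. -/
noncomputable def Qfun (n N : ℕ) (𝒰 : ℕ → (Fin (n+1) → ℝ) → ℝ) (z : ℝ)
    (x : Phase (n+1)) : ℝ :=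
  z ^ (N-2) - (1/2) * ∑ k ∈ Finset.range (N-2), pdq' (𝒰 (N-k-1)) (Fin.last n) x.1 * z ^ k

/-- W_N(z) = 4z^{N−1} − 2 Σ_{k=0}^{N−2} 𝒰_{N−k−1} z^k + Σ p_i²/(z+A_i). -/
noncomputable def Wfun (n N : ℕ) (A : Fin n → ℝ) (𝒰 : ℕ → (Fin (n+1) → ℝ) → ℝ) (z : ℝ)
    (x : Phase (n+1)) : ℝ :=
  4 * z ^ (N-1) - 2 * ∑ k ∈ Finset.range (N-1), 𝒰 (N-k-1) x.1 * z ^ k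
    + ∑ i : Fin n, (x.2 i.castSucc) ^ 2 / (z + A i)

/-- α_N(x,y) = (Q_N(x) − Q_N(y))/(x − y). -/
noncomputable def alphaFun (n N : ℕ) (𝒰 : ℕ → (Fin (n+1) → ℝ) → ℝ) (z w : ℝ)
    (x : Phase (n+1)) : ℝ :=
  (Qfun n N 𝒰 z x - Qfun n N 𝒰 w x) / (z - w)

/-- The hierarchy recurrence hypotheses on the potentials 𝒰₀,…,𝒰_M. -/
def Recur (n M : ℕ) (A : Fin n → ℝ) (B : ℝ) (𝒰 : ℕ → (Fin (n+1) → ℝ) → ℝ) : Prop :=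
  (∀ m ≤ M, ContDiff ℝ (⊤ : ℕ∞) (𝒰 m)) ∧
  (∀ q, 𝒰 0 q = 0) ∧
  (∀ q : Fin (n+1) → ℝ, 𝒰 1 q = -2 * q (Fin.last n) - 2 * B) ∧
  (∀ q : Fin (n+1) → ℝ,
      𝒰 2 q = -2 * (q (Fin.last n)) ^ 2 - (1/2) * ∑ i : Fin n, (q i.castSucc) ^ 2) ∧
  (∀ m, 2 ≤ m → m ≤ M → ∀ q : Fin (n+1) → ℝ,
    (∀ i : Fin n, pdq' (𝒰 m) i.castSucc q
        = (1/2) * q i.castSucc * pdq' (𝒰 (m-1)) (Fin.last n) q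
          - A i * pdq' (𝒰 (m-1)) i.castSucc q) ∧
    pdq' (𝒰 m) (Fin.last n) q
        = 𝒰 (m-1) q + (1/2) * ∑ i : Fin n, q i.castSucc * pdq' (𝒰 (m-1)) i.castSucc q
          + (q (Fin.last n) - B) * pdq' (𝒰 (m-1)) (Fin.last n) q)

/-- The Hamiltonian H_N = (1/2) Σ p_i² + 𝒰_N. -/
noncomputable def Hfun (n N : ℕ) (𝒰 : ℕ → (Fin (n+1) → ℝ) → ℝ) (x : Phase (n+1)) : ℝ :=
  (1/2) * ∑ i : Fin (n+1), (x.2 i) ^ 2 + 𝒰 N x.1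


section AuxBrackets

variable {n : ℕ} (A : Fin n → ℝ) (B z : ℝ) (pt : Phase (n+1))

lemma pdp_U (j : Fin (n+1)) : pdp (Ufun n A B z) j pt = 0 := by
  simp [pdp, Ufun]

lemma pdq_U_last : pdq (Ufun n A B z) (Fin.last n) pt = -4 := by
  have h : ∀ t : ℝ, Ufun n A B z (Function.update pt.1 (Fin.last n) t, pt.2)
      = 4 * z - 4 * t + 4 * B - ∑ i : Fin n, (pt.1 i.castSucc) ^ 2 / (z + A i) := by
    intro t
    simp only [Ufun]
    rw [Function.update_self]
    congr 1
    refine Finset.sum_congr rfl fun i _ => by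
      rw [Function.update_of_ne (Fin.castSucc_lt_last i).ne]
  rw [pdq]
  simp only [h]
  have hd : HasDerivAt (fun t : ℝ => 4 * z - 4 * t + 4 * B
      - ∑ i : Fin n, (pt.1 i.castSucc) ^ 2 / (z + A i)) (-4) (pt.1 (Fin.last n)) := by
    have := ((((hasDerivAt_id (pt.1 (Fin.last n))).const_mul 4).const_sub (4*z)).add_const
      (4*B)).sub_const (∑ i : Fin n, (pt.1 i.castSucc) ^ 2 / (z + A i))
    simpa using this
  exact hd.deriv

lemma pdq_U_cast (i0 : Fin n) :
    pdq (Ufun n A B z) i0.castSucc pt = -(2 * pt.1 i0.castSucc) / (z + A i0) := by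
  have h : ∀ t : ℝ, Ufun n A B z (Function.update pt.1 i0.castSucc t, pt.2)
      = 4 * z - 4 * pt.1 (Fin.last n) + 4 * B
        - ∑ i : Fin n, (if i = i0 then t else pt.1 i.castSucc) ^ 2 / (z + A i) := by
    intro t
    simp only [Ufun]
    rw [Function.update_of_ne (Fin.castSucc_lt_last i0).ne']
    congr 1
    refine Finset.sum_congr rfl fun i _ => by
      rw [Function.update_apply]
      simp [Fin.castSucc_inj]
  rw [pdq]
  simp only [h]
  have hs : HasDerivAt (fun t : ℝ =>
      ∑ i : Fin n, (if i = i0 then t else pt.1 i.castSucc) ^ 2 / (z + A i))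
      (2 * pt.1 i0.castSucc / (z + A i0)) (pt.1 i0.castSucc) := by
    have h1 : ∀ i ∈ Finset.univ, HasDerivAt
        (fun t : ℝ => (if i = i0 then t else pt.1 i.castSucc) ^ 2 / (z + A i))
        (if i = i0 then 2 * pt.1 i0.castSucc / (z + A i0) else 0) (pt.1 i0.castSucc) := by
      intro i _
      by_cases hii : i = i0
      · subst hii
        simp only [if_pos rfl]
        have := (hasDerivAt_pow 2 (pt.1 i.castSucc)).div_const (z + A i)
        simpa using this
      · simp only [if_neg hii]
        exact hasDerivAt_const _ _
    have := HasDerivAt.fun_sum h1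
    simpa using this
  have hd := ((hasDerivAt_const (pt.1 i0.castSucc)
      (4 * z - 4 * pt.1 (Fin.last n) + 4 * B)).fun_sub hs)
  rw [hd.deriv]
  ring

lemma pdq_V_last : pdq (Vfun n A z) (Fin.last n) pt = 0 := by
  have h : ∀ t : ℝ, Vfun n A z (Function.update pt.1 (Fin.last n) t, pt.2)
      = Vfun n A z pt := by
    intro t
    simp only [Vfun]
    congr 1
    refine Finset.sum_congr rfl fun i _ => by
      rw [Function.update_of_ne (Fin.castSucc_lt_last i).ne]
  rw [pdq]
  simp only [h]
  exact deriv_const _ _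

lemma pdq_V_cast (i0 : Fin n) :
    pdq (Vfun n A z) i0.castSucc pt = pt.2 i0.castSucc / (z + A i0) := by
  have h : ∀ t : ℝ, Vfun n A z (Function.update pt.1 i0.castSucc t, pt.2)
      = 2 * pt.2 (Fin.last n)
        + ∑ i : Fin n, pt.2 i.castSucc * (if i = i0 then t else pt.1 i.castSucc) / (z + A i) := by
    intro t
    simp only [Vfun]
    congr 1
    refine Finset.sum_congr rfl fun i _ => by
      rw [Function.update_apply]
      simp [Fin.castSucc_inj]
  rw [pdq]
  simp only [h]
  have hs : HasDerivAt (fun t : ℝ =>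
      ∑ i : Fin n, pt.2 i.castSucc * (if i = i0 then t else pt.1 i.castSucc) / (z + A i))
      (pt.2 i0.castSucc / (z + A i0)) (pt.1 i0.castSucc) := by
    have h1 : ∀ i ∈ Finset.univ, HasDerivAt
        (fun t : ℝ => pt.2 i.castSucc * (if i = i0 then t else pt.1 i.castSucc) / (z + A i))
        (if i = i0 then pt.2 i0.castSucc / (z + A i0) else 0) (pt.1 i0.castSucc) := by
      intro i _
      by_cases hii : i = i0
      · subst hii
        simp only [if_pos rfl]
        have := ((hasDerivAt_id (pt.1 i.castSucc)).const_mul (pt.2 i.castSucc)).div_const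
          (z + A i)
        simpa using this
      · simp only [if_neg hii]
        exact hasDerivAt_const _ _
    have := HasDerivAt.fun_sum h1
    simpa using this
  have hd := (hasDerivAt_const (pt.1 i0.castSucc) (2 * pt.2 (Fin.last n))).fun_add hs
  rw [hd.deriv]
  ring

lemma pdp_V_last : pdp (Vfun n A z) (Fin.last n) pt = 2 := by
  have h : ∀ t : ℝ, Vfun n A z (pt.1, Function.update pt.2 (Fin.last n) t)
      = 2 * t + ∑ i : Fin n, pt.2 i.castSucc * pt.1 i.castSucc / (z + A i) := by
    intro t
    simp only [Vfun]
    rw [Function.update_self]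
    congr 1
    refine Finset.sum_congr rfl fun i _ => by
      rw [Function.update_of_ne (Fin.castSucc_lt_last i).ne]
  rw [pdp]
  simp only [h]
  have hd : HasDerivAt (fun t : ℝ => 2 * t
      + ∑ i : Fin n, pt.2 i.castSucc * pt.1 i.castSucc / (z + A i)) 2 (pt.2 (Fin.last n)) := by
    have := (((hasDerivAt_id (pt.2 (Fin.last n))).const_mul 2)).add_const
      (∑ i : Fin n, pt.2 i.castSucc * pt.1 i.castSucc / (z + A i))
    simpa using this
  exact hd.deriv

lemma pdp_V_cast (i0 : Fin n) :
    pdp (Vfun n A z) i0.castSucc pt = pt.1 i0.castSucc / (z + A i0) := by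
  have h : ∀ t : ℝ, Vfun n A z (pt.1, Function.update pt.2 i0.castSucc t)
      = 2 * pt.2 (Fin.last n)
        + ∑ i : Fin n, (if i = i0 then t else pt.2 i.castSucc) * pt.1 i.castSucc / (z + A i) := by
    intro t
    simp only [Vfun]
    rw [Function.update_of_ne (Fin.castSucc_lt_last i0).ne']
    congr 1
    refine Finset.sum_congr rfl fun i _ => by
      rw [Function.update_apply]
      simp [Fin.castSucc_inj]
  rw [pdp]
  simp only [h]
  have hs : HasDerivAt (fun t : ℝ =>
      ∑ i : Fin n, (if i = i0 then t else pt.2 i.castSucc) * pt.1 i.castSucc / (z + A i))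
      (pt.1 i0.castSucc / (z + A i0)) (pt.2 i0.castSucc) := by
    have h1 : ∀ i ∈ Finset.univ, HasDerivAt
        (fun t : ℝ => (if i = i0 then t else pt.2 i.castSucc) * pt.1 i.castSucc / (z + A i))
        (if i = i0 then pt.1 i0.castSucc / (z + A i0) else 0) (pt.2 i0.castSucc) := by
      intro i _
      by_cases hii : i = i0
      · subst hii
        simp only [if_pos rfl]
        have := ((hasDerivAt_id (pt.2 i.castSucc)).mul_const (pt.1 i.castSucc)).div_const
          (z + A i)
        simpa using this
      · simp only [if_neg hii]
        exact hasDerivAt_const _ _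
    have := HasDerivAt.fun_sum h1
    simpa using this
  have hd := (hasDerivAt_const (pt.2 i0.castSucc) (2 * pt.2 (Fin.last n))).fun_add hs
  rw [hd.deriv]
  ring

lemma pdp_W_last (Nn : ℕ) (𝒰 : ℕ → (Fin (n+1) → ℝ) → ℝ) :
    pdp (Wfun n Nn A 𝒰 z) (Fin.last n) pt = 0 := by
  have h : ∀ t : ℝ, Wfun n Nn A 𝒰 z (pt.1, Function.update pt.2 (Fin.last n) t)
      = Wfun n Nn A 𝒰 z pt := by
    intro t
    simp only [Wfun]
    congr 1
    refine Finset.sum_congr rfl fun i _ => by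
      rw [Function.update_of_ne (Fin.castSucc_lt_last i).ne]
  rw [pdp]
  simp only [h]
  exact deriv_const _ _

lemma pdp_W_cast (Nn : ℕ) (𝒰 : ℕ → (Fin (n+1) → ℝ) → ℝ) (i0 : Fin n) :
    pdp (Wfun n Nn A 𝒰 z) i0.castSucc pt = 2 * pt.2 i0.castSucc / (z + A i0) := by
  have h : ∀ t : ℝ, Wfun n Nn A 𝒰 z (pt.1, Function.update pt.2 i0.castSucc t)
      = 4 * z ^ (Nn-1) - 2 * ∑ k ∈ Finset.range (Nn-1), 𝒰 (Nn-k-1) pt.1 * z ^ k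
        + ∑ i : Fin n, (if i = i0 then t else pt.2 i.castSucc) ^ 2 / (z + A i) := by
    intro t
    simp only [Wfun]
    congr 1
    refine Finset.sum_congr rfl fun i _ => by
      rw [Function.update_apply]
      simp [Fin.castSucc_inj]
  rw [pdp]
  simp only [h]
  have hs : HasDerivAt (fun t : ℝ =>
      ∑ i : Fin n, (if i = i0 then t else pt.2 i.castSucc) ^ 2 / (z + A i))
      (2 * pt.2 i0.castSucc / (z + A i0)) (pt.2 i0.castSucc) := by
    have h1 : ∀ i ∈ Finset.univ, HasDerivAt
        (fun t : ℝ => (if i = i0 then t else pt.2 i.castSucc) ^ 2 / (z + A i))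
        (if i = i0 then 2 * pt.2 i0.castSucc / (z + A i0) else 0) (pt.2 i0.castSucc) := by
      intro i _
      by_cases hii : i = i0
      · subst hii
        simp only [if_pos rfl]
        have := (hasDerivAt_pow 2 (pt.2 i.castSucc)).div_const (z + A i)
        simpa using this
      · simp only [if_neg hii]
        exact hasDerivAt_const _ _
    have := HasDerivAt.fun_sum h1
    simpa using this
  have hd := (hasDerivAt_const (pt.2 i0.castSucc)
      (4 * z ^ (Nn-1) - 2 * ∑ k ∈ Finset.range (Nn-1), 𝒰 (Nn-k-1) pt.1 * z ^ k)).fun_add hs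
  rw [hd.deriv]
  ring

end AuxBrackets

/-- elementary bracket relations among U, V, W_N (no recurrence needed). -/
theorem basic_brackets
    (n : ℕ) (hn : 1 ≤ n) (A : Fin n → ℝ) (B : ℝ)
    (N : ℕ) (hN : 3 ≤ N) (𝒰 : ℕ → (Fin (n+1) → ℝ) → ℝ)
    (hsmooth : ∀ m, 1 ≤ m → m ≤ N - 1 → ContDiff ℝ (⊤ : ℕ∞) (𝒰 m))
    (h0 : ∀ q, 𝒰 0 q = 0) :
    ∀ x y : ℝ, x ≠ y → (∀ i : Fin n, x ≠ -A i) → (∀ i : Fin n, y ≠ -A i) →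
    ∀ pt : Phase (n+1),
      poisson (Ufun n A B x) (Ufun n A B y) pt = 0 ∧
      poisson (Vfun n A x) (Vfun n A y) pt = 0 ∧
      poisson (Vfun n A x) (Ufun n A B y) pt
        = (2 / (y - x)) * (Ufun n A B x pt - Ufun n A B y pt) ∧
      poisson (Wfun n N A 𝒰 x) (Ufun n A B y) pt
        = (4 / (x - y)) * (Vfun n A x pt - Vfun n A y pt) := by
  intro x y hxy hx hy pt
  have hx' : ∀ i : Fin n, x + A i ≠ 0 := fun i h => hx i (by linarith)
  have hy' : ∀ i : Fin n, y + A i ≠ 0 := fun i h => hy i (by linarith)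
  have hxy' : x - y ≠ 0 := sub_ne_zero.mpr hxy
  have hyx' : y - x ≠ 0 := sub_ne_zero.mpr (Ne.symm hxy)
  refine ⟨?_, ?_, ?_, ?_⟩
  · simp [poisson, pdp_U]
  · rw [poisson, Fin.sum_univ_castSucc]
    simp only [pdq_V_last, pdq_V_cast, pdp_V_last, pdp_V_cast, mul_zero, zero_mul]
    rw [Finset.sum_eq_zero (fun i _ => by ring)]
    ring
  · rw [poisson, Fin.sum_univ_castSucc]
    simp only [pdq_U_last, pdq_U_cast, pdp_U, pdq_V_last, pdq_V_cast, pdp_V_last, pdp_V_cast,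
      mul_zero, sub_zero]
    have expand : Ufun n A B x pt - Ufun n A B y pt
        = (∑ i : Fin n, (pt.1 i.castSucc ^ 2 / (y + A i) - pt.1 i.castSucc ^ 2 / (x + A i)))
          + 4 * (x - y) := by
      simp only [Ufun]
      rw [Finset.sum_sub_distrib]
      ring
    rw [expand, mul_add, Finset.mul_sum]
    congr 1
    · refine Finset.sum_congr rfl fun i _ => ?_
      have h1 := hx' i; have h2 := hy' i
      field_simp
      ring
    · field_simp
      ring
  · rw [poisson, Fin.sum_univ_castSucc]
    simp only [pdp_W_last, pdp_W_cast, pdq_U_last, pdq_U_cast, pdp_U,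
      mul_zero, zero_mul, sub_zero, add_zero]
    have expand : Vfun n A x pt - Vfun n A y pt
        = ∑ i : Fin n, (pt.2 i.castSucc * pt.1 i.castSucc / (x + A i)
            - pt.2 i.castSucc * pt.1 i.castSucc / (y + A i)) := by
      simp only [Vfun]
      rw [Finset.sum_sub_distrib]
      ring
    rw [expand, Finset.mul_sum]
    refine Finset.sum_congr rfl fun i _ => ?_
    have h1 := hx' i; have h2 := hy' i
    field_simp
    ring
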